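/- arXiv:1409.3825 — 6 statements merged into one kernel-verified Lean document; each statement's English description precedes it below -/
import Mathlib

section
/- For the kinetic Maxwellian M(U,ξ) = (1/(gπ))·(2gh − (ξ−u)²)₊^{1/2}, one has ∫_ℝ ξ²·M(U,ξ) dξ = h u² + g h²/2. -/
open MeasureTheory Real

noncomputable def Mx (g h u ξ : ℝ) : ℝ := (1/(g*π)) * Real.sqrt (max 0 (2*g*h - (ξ-u)^2))
noncomputable def H0 (g f ξ : ℝ) : ℝ := ξ^2*f/2 + (g^2*π^2/6)*f^3
noncomputable def dH0 (g f ξ : ℝ) : ℝ := ξ^2/2 + (g^2*π^2/2)*f^2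

lemma aux_sin_subst (g : ℝ → ℝ) (hg : Continuous g) :
    (∫ x in (-1:ℝ)..1, g x * Real.sqrt (1 - x^2)) =
      ∫ θ in (-(π/2))..(π/2), g (Real.sin θ) * Real.cos θ ^ 2 := by
  have h1 : (∫ x in (-1:ℝ)..1, g x * Real.sqrt (1 - x^2)) =
      ∫ x in Real.sin (-(π/2))..Real.sin (π/2), g x * Real.sqrt (1 - x^2) := by
    norm_num [Real.sin_neg]
  rw [h1, ← intervalIntegral.integral_comp_mul_deriv (f := Real.sin) (f' := Real.cos)
      (g := fun x => g x * Real.sqrt (1 - x^2))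
      (fun x _ => Real.hasDerivAt_sin x) Real.continuousOn_cos (by fun_prop)]
  apply intervalIntegral.integral_congr
  intro θ hθ
  have hmem : θ ∈ Set.Icc (-(π/2)) (π/2) := by
    rwa [Set.uIcc_of_le (by linarith [Real.pi_pos])] at hθ
  have hc : Real.cos θ = Real.sqrt (1 - Real.sin θ ^ 2) :=
    Real.cos_eq_sqrt_one_sub_sin_sq hmem.1 hmem.2
  simp only [Function.comp]
  rw [← hc]
  ring

lemma aux_sq_sqrt : (∫ x in (-1:ℝ)..1, x^2 * Real.sqrt (1 - x^2)) = π/8 := by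
  rw [aux_sin_subst (fun x => x^2) (by fun_prop)]
  rw [show (∫ θ in (-(π/2))..(π/2), Real.sin θ ^ 2 * Real.cos θ ^ 2) =
      (π/2 - (-(π/2)))/8 - (Real.sin (4*(π/2)) - Real.sin (4*(-(π/2))))/32 from
      integral_sin_sq_mul_cos_sq]
  have : (4:ℝ)*(π/2) = 2*π := by ring
  rw [this, show (4:ℝ)*(-(π/2)) = -(2*π) by ring, Real.sin_neg]
  simp [Real.sin_two_pi]

lemma aux_id_sqrt : (∫ x in (-1:ℝ)..1, x * Real.sqrt (1 - x^2)) = 0 := by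
  rw [aux_sin_subst (fun x => x) (by fun_prop)]
  simp

lemma aux_one_sqrt : (∫ x in (-1:ℝ)..1, Real.sqrt (1 - x^2)) = π/2 := by
  have := aux_sin_subst (fun _ => (1:ℝ)) (by fun_prop)
  simpa using this

theorem maxwellian_second_moment (g h u : ℝ) (hg : 0 < g) (hh : 0 ≤ h) :
    (∫ ξ : ℝ, ξ^2 * Mx g h u ξ) = h * u^2 + g * h^2 / 2 := by
  set r : ℝ := Real.sqrt (2*g*h) with hr
  have hr0 : 0 ≤ r := Real.sqrt_nonneg _
  have hr2 : r^2 = 2*g*h := Real.sq_sqrt (by positivity)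
  have hπ : (0:ℝ) < π := Real.pi_pos
  -- restrict to the support
  have hsupp : ∀ ξ, ξ ∉ Set.Ioc (u - r) (u + r) → ξ^2 * Mx g h u ξ = 0 := by
    intro ξ hξ
    have : 2*g*h - (ξ-u)^2 ≤ 0 := by
      simp only [Set.mem_Ioc, not_and_or, not_lt, not_le] at hξ
      rcases hξ with h1 | h1 <;> nlinarith [sq_nonneg (ξ - u)]
    have : max 0 (2*g*h - (ξ-u)^2) = 0 := max_eq_left this
    simp [Mx, this]
  rw [← setIntegral_eq_integral_of_forall_compl_eq_zero hsupp,
      ← intervalIntegral.integral_of_le (by linarith)]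
  have hmax : ∀ ξ ∈ Set.uIcc (u - r) (u + r),
      ξ^2 * Mx g h u ξ = (1/(g*π)) * (ξ^2 * Real.sqrt (r^2 - (ξ-u)^2)) := by
    intro ξ hξ
    rw [Set.uIcc_of_le (by linarith)] at hξ
    have h1 : (ξ - u)^2 ≤ r^2 := by nlinarith [hξ.1, hξ.2]
    have : max 0 (2*g*h - (ξ-u)^2) = r^2 - (ξ-u)^2 := by
      rw [max_eq_right (by nlinarith)]; rw [hr2]
    simp [Mx, this]; ring
  rw [intervalIntegral.integral_congr hmax, intervalIntegral.integral_const_mul]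
  -- translate
  have ht : (∫ ξ in (u-r)..(u+r), ξ^2 * Real.sqrt (r^2 - (ξ-u)^2)) =
      ∫ x in (-r)..r, (x+u)^2 * Real.sqrt (r^2 - x^2) := by
    have h2 := intervalIntegral.integral_comp_sub_right (a := u - r) (b := u + r)
      (fun x => (x+u)^2 * Real.sqrt (r^2 - x^2)) u
    rw [show u - r - u = -r by ring, show u + r - u = r by ring] at h2
    rw [← h2]
    apply intervalIntegral.integral_congr
    intro ξ _
    simp [sub_add_cancel]
  rw [ht]
  -- scale: x = r * y
  have hs : (∫ x in (-r)..r, (x+u)^2 * Real.sqrt (r^2 - x^2)) =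
      r • ∫ y in (-1:ℝ)..1, (r*y+u)^2 * Real.sqrt (r^2 - (r*y)^2) := by
    have h2 := intervalIntegral.smul_integral_comp_mul_left (a := (-1:ℝ)) (b := 1)
      (fun x => (x+u)^2 * Real.sqrt (r^2 - x^2)) r
    rw [show r * (-1:ℝ) = -r by ring, mul_one] at h2
    rw [← h2]
  rw [hs]
  have hsq : ∀ y : ℝ, Real.sqrt (r^2 - (r*y)^2) = r * Real.sqrt (1 - y^2) := by
    intro y
    have : r^2 - (r*y)^2 = r^2 * (1 - y^2) := by ring
    rw [this, Real.sqrt_mul (sq_nonneg r), Real.sqrt_sq hr0]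
  have hexp : (∫ y in (-1:ℝ)..1, (r*y+u)^2 * Real.sqrt (r^2 - (r*y)^2)) =
      r * (r^2 * (π/8) + 2*r*u * 0 + u^2 * (π/2)) := by
    have heq : ∀ y ∈ Set.uIcc (-1:ℝ) 1, (r*y+u)^2 * Real.sqrt (r^2 - (r*y)^2) =
        r * (r^2 * (y^2 * Real.sqrt (1 - y^2)) + 2*r*u * (y * Real.sqrt (1 - y^2))
          + u^2 * Real.sqrt (1 - y^2)) := by
      intro y _
      rw [hsq y]; ring
    rw [intervalIntegral.integral_congr heq, intervalIntegral.integral_const_mul]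
    congr 1
    have i1 : IntervalIntegrable (fun y : ℝ => r^2 * (y^2 * Real.sqrt (1 - y^2)))
        volume (-1) 1 := (Continuous.intervalIntegrable (by fun_prop) _ _)
    have i2 : IntervalIntegrable (fun y : ℝ => 2*r*u * (y * Real.sqrt (1 - y^2)))
        volume (-1) 1 := (Continuous.intervalIntegrable (by fun_prop) _ _)
    have i3 : IntervalIntegrable (fun y : ℝ => u^2 * Real.sqrt (1 - y^2))
        volume (-1) 1 := (Continuous.intervalIntegrable (by fun_prop) _ _)
    rw [intervalIntegral.integral_add (i1.add i2) i3, intervalIntegral.integral_add i1 i2,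
        intervalIntegral.integral_const_mul, intervalIntegral.integral_const_mul,
        intervalIntegral.integral_const_mul, aux_sq_sqrt, aux_id_sqrt, aux_one_sqrt]
  rw [hexp, smul_eq_mul,
    show r * (r * (r^2*(π/8) + 2*r*u*0 + u^2*(π/2))) = r^2 * (r^2 * (π/8) + u^2*(π/2)) by ring,
    hr2]
  field_simp
  ring
end

section
/- With H₀(f,ξ) = ξ²f/2 + (g²π²/6)f³ and M(U,ξ) the kinetic Maxwellian, one has ∫_ℝ H₀(M(U,ξ),ξ) dξ = h u²/2 + g h²/2, i.e. the integral of the kinetic entropy of the Maxwellian equals the macroscopic entropy η(U). -/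
open MeasureTheory Real

/-!
With `r = √(2 g h)` the Maxwellian is `(g π)⁻¹ √(r² - (ξ - u)²)`, the square root vanishing off
`[u - r, u + r]`. Since `√x ^ 3 = x √x`, the kinetic entropy of the Maxwellian is `(g π)⁻¹` times
a quadratic polynomial in `v = ξ - u` against the semicircle weight `√(r² - v²)`, and the
semicircle moments `∫ √(r² - v²) = π r² / 2`, `∫ v √(r² - v²) = 0`, `∫ v² √(r² - v²) = π r⁴ / 8`
give the value.
-/

lemma sqrt_zero_max (x : ℝ) : √(max 0 x) = √x := by
  rcases le_total 0 x with hx | hx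
  · rw [max_eq_right hx]
  · rw [max_eq_left hx, sqrt_zero, sqrt_eq_zero'.2 hx]

lemma sqrt_pow_three (x : ℝ) : √x ^ 3 = x * √x := by
  rcases le_total 0 x with hx | hx
  · rw [pow_succ, sq_sqrt hx]
  · simp [sqrt_eq_zero'.2 hx]

section Semicircle

variable {r v : ℝ}

lemma hasDerivAt_sqrt_sq_sub_sq (hv : v ∈ Set.Ioo (-r) r) :
    HasDerivAt (fun v => √(r ^ 2 - v ^ 2)) (-v / √(r ^ 2 - v ^ 2)) v := by
  have hpos : 0 < r ^ 2 - v ^ 2 := by nlinarith [hv.1, hv.2]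
  convert ((hasDerivAt_pow 2 v).const_sub (r ^ 2)).sqrt hpos.ne' using 1
  field_simp
  ring

lemma hasDerivAt_mul_sqrt_sq_sub_sq_add_arcsin (hv : v ∈ Set.Ioo (-r) r) :
    HasDerivAt (fun v => v * √(r ^ 2 - v ^ 2) + r ^ 2 * arcsin (v / r))
      (2 * √(r ^ 2 - v ^ 2)) v := by
  obtain ⟨h₁, h₂⟩ := hv
  have hr : 0 < r := by linarith
  have hpos : 0 < r ^ 2 - v ^ 2 := by nlinarith
  have hsq : √(1 - (v / r) ^ 2) = √(r ^ 2 - v ^ 2) / r := by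
    rw [← sqrt_sq hr.le, ← sqrt_div' _ (sq_nonneg r), sqrt_sq hr.le]
    congr 1
    field_simp
  have harcsin := (hasDerivAt_arcsin (by rw [ne_eq, div_eq_iff hr.ne']; intro; linarith)
    (by rw [ne_eq, div_eq_iff hr.ne']; intro; linarith)).comp v ((hasDerivAt_id' v).div_const r)
  refine (((hasDerivAt_id' v).mul (hasDerivAt_sqrt_sq_sub_sq ⟨h₁, h₂⟩)).add
    (harcsin.const_mul (r ^ 2))).congr_deriv ?_
  rw [hsq]
  field_simp
  rw [sq_sqrt hpos.le]
  ring

lemma hasDerivAt_sqrt_sq_sub_sq_pow_three (hv : v ∈ Set.Ioo (-r) r) :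
    HasDerivAt (fun v => √(r ^ 2 - v ^ 2) ^ 3) (-3 * v * √(r ^ 2 - v ^ 2)) v := by
  have hpos : 0 < r ^ 2 - v ^ 2 := by nlinarith [hv.1, hv.2]
  refine ((hasDerivAt_sqrt_sq_sub_sq hv).pow 3).congr_deriv ?_
  field_simp
  rw [sq_sqrt hpos.le]
  ring

lemma integral_quadratic_mul_sqrt_sq_sub_sq (a b c : ℝ) (hr : 0 ≤ r) :
    ∫ v in -r..r, (a + b * v + c * v ^ 2) * √(r ^ 2 - v ^ 2) =
      π * r ^ 2 * (a / 2 + c * r ^ 2 / 8) := by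
  rcases hr.eq_or_lt with rfl | hr
  · simp
  -- Primitives on (-r, r), with s = √(r² - v²): (v s + r² arcsin (v / r))' = 2 s,
  -- (s³)' = -3 v s and (v s³)' = (r² - 4 v²) s, the last because s³ = (r² - v²) s.
  set F : ℝ → ℝ := fun v =>
    (a / 2 + c * r ^ 2 / 8) * (v * √(r ^ 2 - v ^ 2) + r ^ 2 * arcsin (v / r))
      - b / 3 * √(r ^ 2 - v ^ 2) ^ 3 - c / 4 * (v * √(r ^ 2 - v ^ 2) ^ 3)
  have hF : ∀ v ∈ Set.Ioo (-r) r, HasDerivAt F ((a + b * v + c * v ^ 2) * √(r ^ 2 - v ^ 2)) v := by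
    intro v hv
    have hs₃ := hasDerivAt_sqrt_sq_sub_sq_pow_three hv
    refine ((((hasDerivAt_mul_sqrt_sq_sub_sq_add_arcsin hv).const_mul _).sub
      (hs₃.const_mul _)).sub (((hasDerivAt_id' v).mul hs₃).const_mul _)).congr_deriv ?_
    rw [sqrt_pow_three]
    ring
  rw [intervalIntegral.integral_eq_sub_of_hasDerivAt_of_le (by linarith) (by fun_prop) hF
    ((by fun_prop : Continuous _).intervalIntegrable _ _)]
  simp only [F, neg_sq, sub_self, sqrt_zero, neg_div, div_self hr.ne', arcsin_neg, arcsin_one]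
  ring

lemma integral_mul_sqrt_sq_sub_sq_eq_intervalIntegral (φ : ℝ → ℝ) (hr : 0 ≤ r) :
    ∫ v, φ v * √(r ^ 2 - v ^ 2) = ∫ v in -r..r, φ v * √(r ^ 2 - v ^ 2) := by
  refine (intervalIntegral.integral_eq_integral_of_support_subset fun v hv => ?_).symm
  by_contra hv'
  refine hv (mul_eq_zero_of_right _ (sqrt_eq_zero'.2 ?_))
  rw [Set.mem_Ioc, not_and_or, not_lt, not_le] at hv'
  rcases hv' with hv' | hv' <;> nlinarith

end Semicircle

lemma H0_Mx_eq (g h u ξ : ℝ) :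
    H0 g (Mx g h u ξ) ξ = (g * π)⁻¹ * ((u ^ 2 / 2 + 2 * g * h / 6 + u * (ξ - u) +
      1 / 3 * (ξ - u) ^ 2) * √(2 * g * h - (ξ - u) ^ 2)) := by
  rw [H0, Mx, sqrt_zero_max, mul_pow, sqrt_pow_three]
  rcases eq_or_ne g 0 with rfl | hg
  · simp
  field_simp
  ring

theorem kinetic_entropy_integral (g h u : ℝ) (hg : 0 < g) (hh : 0 ≤ h) :
    (∫ ξ : ℝ, H0 g (Mx g h u ξ) ξ) = h * u^2 / 2 + g * h^2 / 2 := by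
  set r := √(2 * g * h)
  have hr : r ^ 2 = 2 * g * h := sq_sqrt (by positivity)
  calc (∫ ξ : ℝ, H0 g (Mx g h u ξ) ξ)
      = (g * π)⁻¹ * ∫ v, (u ^ 2 / 2 + r ^ 2 / 6 + u * v + 1 / 3 * v ^ 2) * √(r ^ 2 - v ^ 2) := by
        simp_rw [H0_Mx_eq, ← hr]
        rw [integral_const_mul, integral_sub_right_eq_self
          (fun v => (u ^ 2 / 2 + r ^ 2 / 6 + u * v + 1 / 3 * v ^ 2) * √(r ^ 2 - v ^ 2))]
    _ = (g * π)⁻¹ * (π * r ^ 2 * ((u ^ 2 / 2 + r ^ 2 / 6) / 2 + 1 / 3 * r ^ 2 / 8)) := by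
        rw [integral_mul_sqrt_sq_sub_sq_eq_intervalIntegral _ (sqrt_nonneg _),
          integral_quadratic_mul_sqrt_sq_sub_sq _ _ _ (sqrt_nonneg _)]
    _ = h * u^2 / 2 + g * h^2 / 2 := by
        rw [hr]
        field_simp
        ring
end

section
/- Subdifferential inequality: for any h ≥ 0, u ∈ ℝ, f ≥ 0 and ξ ∈ ℝ, H₀(f,ξ) ≥ H₀(M(U,ξ),ξ) + (gh − u²/2 + ξu)·(f − M(U,ξ)), where gh − u²/2 + ξu = η'(U)·(1,ξ)ᵀ. -/
open MeasureTheory Real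

/-!
`H0 g · ξ` is a cubic that is convex on `[0, ∞)` with derivative `dH0 g · ξ`, so it lies above its
tangent at the Maxwellian value `M = Mx g h u ξ ≥ 0`. Writing `A = 2gh - (ξ - u)²`, the slope of
that tangent is `ξ²/2 + max 0 A / 2`, while `gh - u²/2 + ξu = ξ²/2 + A/2`. The two slopes agree
when `A > 0`; when `A ≤ 0` we have `M = 0`, the tangent slope is the larger one and `f - M = f ≥ 0`.
-/

lemma H0_sub_tangent (g f m ξ : ℝ) :
    H0 g f ξ - (H0 g m ξ + dH0 g m ξ * (f - m)) = g^2*π^2/6 * ((f - m)^2 * (f + 2*m)) := by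
  simp only [H0, dH0]
  ring

lemma H0_ge_tangent (g : ℝ) {f m : ℝ} (ξ : ℝ) (hf : 0 ≤ f) (hm : 0 ≤ m) :
    H0 g f ξ ≥ H0 g m ξ + dH0 g m ξ * (f - m) := by
  have h := H0_sub_tangent g f m ξ
  have : 0 ≤ g^2*π^2/6 * ((f - m)^2 * (f + 2*m)) := by positivity
  linarith

lemma Mx_nonneg {g : ℝ} (hg : 0 ≤ g) (h u ξ : ℝ) : 0 ≤ Mx g h u ξ := by
  unfold Mx
  have := pi_pos
  positivity

lemma Mx_eq_zero {g h u ξ : ℝ} (hA : 2*g*h - (ξ-u)^2 ≤ 0) : Mx g h u ξ = 0 := by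
  rw [Mx, max_eq_left hA, sqrt_zero, mul_zero]

lemma dH0_Mx {g : ℝ} (hg : g ≠ 0) (h u ξ : ℝ) :
    dH0 g (Mx g h u ξ) ξ = ξ^2/2 + max 0 (2*g*h - (ξ-u)^2) / 2 := by
  have hgπ : g * π ≠ 0 := mul_ne_zero hg pi_ne_zero
  rw [dH0, Mx, mul_pow, sq_sqrt (le_max_left _ _)]
  field_simp

lemma entropy_slope_mul_le {g : ℝ} (hg : 0 < g) (h u : ℝ) {f : ℝ} (ξ : ℝ) (hf : 0 ≤ f) :
    (g*h - u^2/2 + ξ*u) * (f - Mx g h u ξ) ≤ dH0 g (Mx g h u ξ) ξ * (f - Mx g h u ξ) := by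
  rw [dH0_Mx hg.ne']
  rcases le_or_gt (2*g*h - (ξ-u)^2) 0 with hA | hA
  · rw [Mx_eq_zero hA, max_eq_left hA, sub_zero]
    exact mul_le_mul_of_nonneg_right (by linarith) hf
  · rw [max_eq_right hA.le]
    exact le_of_eq (by ring)

theorem subdifferential_inequality_general (g h u f ξ : ℝ) (hg : 0 < g) (hf : 0 ≤ f) :
    H0 g f ξ ≥ H0 g (Mx g h u ξ) ξ + (g*h - u^2/2 + ξ*u) * (f - Mx g h u ξ) := by
  calc H0 g f ξ ≥ H0 g (Mx g h u ξ) ξ + dH0 g (Mx g h u ξ) ξ * (f - Mx g h u ξ) :=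
        H0_ge_tangent g ξ hf (Mx_nonneg hg.le h u ξ)
    _ ≥ H0 g (Mx g h u ξ) ξ + (g*h - u^2/2 + ξ*u) * (f - Mx g h u ξ) := by
        linarith [entropy_slope_mul_le hg h u ξ hf]

theorem subdifferential_inequality (g h u f ξ : ℝ) (hg : 0 < g) (hh : 0 ≤ h) (hf : 0 ≤ f) :
    H0 g f ξ ≥ H0 g (Mx g h u ξ) ξ + (g*h - u^2/2 + ξ*u) * (f - Mx g h u ξ) :=
  subdifferential_inequality_general g h u f ξ hg hf
end

section
/- Entropy minimization principle: if f : ℝ → [0,∞) is measurable with h = ∫ f(ξ) dξ and hu = ∫ ξ f(ξ) dξ finite, then η(U) = ∫_ℝ H₀(M(U,ξ),ξ) dξ ≤ ∫_ℝ H₀(f(ξ),ξ) dξ, where U = (h,hu). -/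
open MeasureTheory Real

noncomputable def Gr (r x : ℝ) : ℝ := Real.sqrt (max 0 (r^2 - x^2))

lemma Gr_cont (r : ℝ) : Continuous (Gr r) := by
  unfold Gr; fun_prop

lemma Gr_nonneg (r x : ℝ) : 0 ≤ Gr r x := Real.sqrt_nonneg _

lemma Gr_zero {r x : ℝ} (hr : 0 ≤ r) (hx : x ∉ Set.Icc (-r) r) : Gr r x = 0 := by
  unfold Gr
  rw [max_eq_left, Real.sqrt_zero]
  simp only [Set.mem_Icc, not_and_or, not_le] at hx
  rcases hx with hx | hx <;> nlinarith [sq_nonneg (x + r), sq_nonneg (x - r)]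

lemma subst_lemma (r : ℝ) {g : ℝ → ℝ} (hgc : Continuous g) :
    (∫ θ in (-(π/2))..(π/2), (r * Real.cos θ) * g (r * Real.sin θ)) = ∫ x in (-r)..r, g x := by
  have h := intervalIntegral.integral_comp_smul_deriv (a := -(π/2)) (b := π/2)
    (f := fun θ => r * Real.sin θ) (f' := fun θ => r * Real.cos θ)
    (fun x _ => (Real.hasDerivAt_sin x).const_mul r) (by fun_prop) hgc
  simpa [smul_eq_mul, Real.sin_pi_div_two] using h

lemma line_eq_interval {r : ℝ} (hr : 0 ≤ r) {F : ℝ → ℝ}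
    (h0 : ∀ x ∉ Set.Icc (-r) r, F x = 0) :
    (∫ x : ℝ, F x) = ∫ x in (-r)..r, F x := by
  rw [intervalIntegral.integral_of_le (by linarith), ← MeasureTheory.integral_Icc_eq_integral_Ioc,
    ← MeasureTheory.integral_indicator measurableSet_Icc]
  congr 1
  funext x
  by_cases hx : x ∈ Set.Icc (-r) r
  · simp [Set.indicator_of_mem hx]
  · simp [Set.indicator_of_notMem hx, h0 x hx]

lemma cos_sq_integral : (∫ θ in (-(π/2))..(π/2), Real.cos θ^2) = π/2 := by
  rw [integral_cos_sq]
  simp [Real.cos_pi_div_two, Real.sin_pi_div_two]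
  try ring

lemma cos_pow4_integral : (∫ θ in (-(π/2))..(π/2), Real.cos θ^4) = 3*π/8 := by
  have h := integral_cos_pow (a := -(π/2)) (b := π/2) 2
  norm_num [cos_sq_integral, Real.cos_pi_div_two, Real.sin_pi_div_two] at h
  rw [h]; ring

lemma Gr_at_sin {r : ℝ} (hr : 0 ≤ r) {θ : ℝ} (hθ : θ ∈ Set.Icc (-(π/2)) (π/2)) :
    Gr r (r * Real.sin θ) = r * Real.cos θ := by
  have hcos : 0 ≤ Real.cos θ := Real.cos_nonneg_of_mem_Icc hθ
  have h1 : r^2 - (r * Real.sin θ)^2 = (r * Real.cos θ)^2 := by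
    have := Real.sin_sq_add_cos_sq θ; nlinarith
  unfold Gr
  rw [h1, max_eq_right (sq_nonneg _), Real.sqrt_sq (mul_nonneg hr hcos)]

lemma contGr3 (r : ℝ) : Continuous (fun x => (Gr r x)^3) := by
  have := Gr_cont r; fun_prop


lemma uIcc_pi : Set.uIcc (-(π/2)) (π/2) = Set.Icc (-(π/2)) (π/2) :=
  Set.uIcc_of_le (by linarith [Real.pi_pos])

lemma I1 {r : ℝ} (hr : 0 ≤ r) : (∫ x : ℝ, Gr r x) = π*r^2/2 := by
  rw [line_eq_interval hr (fun x hx => Gr_zero hr hx), ← subst_lemma r (Gr_cont r),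
    intervalIntegral.integral_congr (g := fun θ => r^2 * Real.cos θ^2)
      (fun θ hθ => by rw [uIcc_pi] at hθ; rw [Gr_at_sin hr hθ]; ring),
    intervalIntegral.integral_const_mul, cos_sq_integral]
  ring

lemma I2 (r : ℝ) : (∫ x : ℝ, x * Gr r x) = 0 := by
  have h := MeasureTheory.integral_neg_eq_self (fun x => x * Gr r x) volume
  have e : (fun x : ℝ => (-x) * Gr r (-x)) = fun x => -(x * Gr r x) := by
    funext x; unfold Gr; rw [neg_sq]; ring
  rw [show (fun x : ℝ => (fun y : ℝ => y * Gr r y) (-x)) = fun x : ℝ => (-x) * Gr r (-x) from rfl] at h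
  rw [e] at h
  rw [MeasureTheory.integral_neg] at h
  linarith

lemma I3 {r : ℝ} (hr : 0 ≤ r) : (∫ x : ℝ, x^2 * Gr r x) = π*r^4/8 := by
  have hc : Continuous (fun x => x^2 * Gr r x) := by have := Gr_cont r; fun_prop
  rw [line_eq_interval hr (fun x hx => by rw [Gr_zero hr hx]; ring),
    ← subst_lemma r hc,
    intervalIntegral.integral_congr
      (g := fun θ => r^4 * (Real.cos θ^2 - Real.cos θ^4))
      (fun θ hθ => by
        rw [uIcc_pi] at hθ
        simp only
        rw [Gr_at_sin hr hθ]
        have := Real.sin_sq_add_cos_sq θ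
        linear_combination r^4 * Real.cos θ^2 * this),
    intervalIntegral.integral_const_mul,
    intervalIntegral.integral_sub (by apply Continuous.intervalIntegrable; fun_prop)
      (by apply Continuous.intervalIntegrable; fun_prop),
    cos_sq_integral, cos_pow4_integral]
  ring

lemma I4 {r : ℝ} (hr : 0 ≤ r) : (∫ x : ℝ, (Gr r x)^3) = 3*π*r^4/8 := by
  rw [line_eq_interval hr (fun x hx => by rw [Gr_zero hr hx]; ring),
    ← subst_lemma r (contGr3 r),
    intervalIntegral.integral_congr (g := fun θ => r^4 * Real.cos θ^4)
      (fun θ hθ => by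
        rw [uIcc_pi] at hθ
        simp only
        rw [Gr_at_sin hr hθ]
        ring),
    intervalIntegral.integral_const_mul, cos_pow4_integral]
  ring

lemma int_zero_outside {r : ℝ} {F : ℝ → ℝ} (hF : Continuous F)
    (h0 : ∀ x ∉ Set.Icc (-r) r, F x = 0) : Integrable F :=
  hF.integrable_of_hasCompactSupport (HasCompactSupport.intro isCompact_Icc h0)

lemma intGr {r : ℝ} (hr : 0 ≤ r) : Integrable (Gr r) :=
  int_zero_outside (Gr_cont r) (fun x hx => Gr_zero hr hx)

lemma intxGr {r : ℝ} (hr : 0 ≤ r) : Integrable (fun x => x * Gr r x) :=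
  int_zero_outside (by have := Gr_cont r; fun_prop)
    (fun x hx => by rw [Gr_zero hr hx]; ring)

lemma intx2Gr {r : ℝ} (hr : 0 ≤ r) : Integrable (fun x => x^2 * Gr r x) :=
  int_zero_outside (by have := Gr_cont r; fun_prop)
    (fun x hx => by rw [Gr_zero hr hx]; ring)

lemma intGr3 {r : ℝ} (hr : 0 ≤ r) : Integrable (fun x => (Gr r x)^3) :=
  int_zero_outside (contGr3 r) (fun x hx => by rw [Gr_zero hr hx]; ring)

lemma combo {r : ℝ} (hr : 0 ≤ r) (a b c d : ℝ) :
    (∫ x : ℝ, (a * Gr r x + b * (x * Gr r x) + c * (x^2 * Gr r x) + d * (Gr r x)^3))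
      = a*(π*r^2/2) + c*(π*r^4/8) + d*(3*π*r^4/8) := by
  have h1 : Integrable (fun x : ℝ => a * Gr r x) := (intGr hr).const_mul a
  have h2 : Integrable (fun x : ℝ => b * (x * Gr r x)) := (intxGr hr).const_mul b
  have h3 : Integrable (fun x : ℝ => c * (x^2 * Gr r x)) := (intx2Gr hr).const_mul c
  have h4 : Integrable (fun x : ℝ => d * (Gr r x)^3) := (intGr3 hr).const_mul d
  have h12 : Integrable (fun x : ℝ => a * Gr r x + b * (x * Gr r x)) := h1.add h2
  have h123 : Integrable (fun x : ℝ => a * Gr r x + b * (x * Gr r x) + c * (x^2 * Gr r x)) :=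
    h12.add h3
  rw [MeasureTheory.integral_add h123 h4, MeasureTheory.integral_add h12 h3,
    MeasureTheory.integral_add h1 h2,
    integral_const_mul, integral_const_mul, integral_const_mul, integral_const_mul,
    I1 hr, I2 r, I3 hr, I4 hr]
  ring

lemma combo_int {r : ℝ} (hr : 0 ≤ r) (a b c d : ℝ) :
    Integrable (fun x : ℝ => a * Gr r x + b * (x * Gr r x) + c * (x^2 * Gr r x) + d * (Gr r x)^3) := by
  exact ((((intGr hr).const_mul a).add ((intxGr hr).const_mul b)).add
    ((intx2Gr hr).const_mul c)).add ((intGr3 hr).const_mul d)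

lemma pw_aux (g h u ξ t m : ℝ) (hg : 0 < g) (ht : 0 ≤ t) (hm0 : 0 ≤ m)
    (hms : g^2*π^2*m^2 = max 0 (2*g*h - (ξ-u)^2)) :
    0 ≤ (H0 g t ξ - (u*ξ + (g*h - u^2/2)) * t) - (H0 g m ξ - (u*ξ + (g*h - u^2/2)) * m) := by
  have hπ : (0:ℝ) < π := Real.pi_pos
  rcases le_or_gt (2*g*h - (ξ-u)^2) 0 with hs | hs
  · have hz : g^2*π^2*m^2 = 0 := by rw [hms, max_eq_left hs]
    have hp : 0 < g^2*π^2 := by positivity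
    have hm2 : m^2 = 0 := by nlinarith [sq_nonneg m]
    have hm : m = 0 := pow_eq_zero_iff (by norm_num : (2:ℕ) ≠ 0) |>.mp hm2
    rw [hm]
    have id1 : (H0 g t ξ - (u*ξ + (g*h - u^2/2)) * t) - (H0 g 0 ξ - (u*ξ + (g*h - u^2/2)) * 0)
        = (g^2*π^2/6)*t^3 + (t/2)*((ξ-u)^2 - 2*g*h) := by unfold H0; ring
    rw [id1]
    have h1 : 0 ≤ (g^2*π^2/6)*t^3 := by positivity
    have h2 : 0 ≤ (t/2)*((ξ-u)^2 - 2*g*h) :=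
      mul_nonneg (by linarith) (by linarith)
    linarith
  · have hms' : g^2*π^2*m^2 = 2*g*h - (ξ-u)^2 := by rw [hms, max_eq_right hs.le]
    have id2 : (H0 g t ξ - (u*ξ + (g*h - u^2/2)) * t) - (H0 g m ξ - (u*ξ + (g*h - u^2/2)) * m)
        = (g^2*π^2/6)*((t-m)^2*(t+2*m)) + ((t-m)/2) * (g^2*π^2*m^2 - (2*g*h - (ξ-u)^2)) := by
      unfold H0; ring
    rw [id2, hms', sub_self, mul_zero, add_zero]
    exact mul_nonneg (by positivity) (mul_nonneg (sq_nonneg _) (by linarith))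

theorem entropy_minimization (g h u : ℝ) (f : ℝ → ℝ) (hg : 0 < g)
    (hfpos : ∀ ξ, 0 ≤ f ξ) (hfmeas : Measurable f)
    (hfint : Integrable f) (hfint1 : Integrable (fun ξ => ξ * f ξ))
    (hHint : Integrable (fun ξ => H0 g (f ξ) ξ))
    (hmass : (∫ ξ : ℝ, f ξ) = h) (hmom : (∫ ξ : ℝ, ξ * f ξ) = h * u) :
    h * u^2 / 2 + g * h^2 / 2 = (∫ ξ : ℝ, H0 g (Mx g h u ξ) ξ) ∧
    (∫ ξ : ℝ, H0 g (Mx g h u ξ) ξ) ≤ ∫ ξ : ℝ, H0 g (f ξ) ξ := by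
  have hπ : (0:ℝ) < π := Real.pi_pos
  have hg0 : g ≠ 0 := ne_of_gt hg
  have hπ0 : π ≠ 0 := Real.pi_ne_zero
  have h0 : 0 ≤ h := hmass ▸ integral_nonneg hfpos
  set r := Real.sqrt (2*g*h) with hrdef
  have hr : 0 ≤ r := Real.sqrt_nonneg _
  have hr2 : r^2 = 2*g*h := Real.sq_sqrt (mul_nonneg (by linarith) h0)
  set k := 1/(g*π) with hkdef
  have hMx : ∀ ξ, Mx g h u ξ = k * Gr r (ξ - u) := by
    intro ξ; unfold Mx Gr; rw [hr2, hkdef]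
  -- translated pointwise identities
  have eM : ∀ ξ : ℝ, k * Gr r (ξ-u) + 0*((ξ-u)*Gr r (ξ-u)) + 0*((ξ-u)^2*Gr r (ξ-u))
      + 0*(Gr r (ξ-u))^3 = Mx g h u ξ := fun ξ => by rw [hMx ξ]; ring
  have eXM : ∀ ξ : ℝ, (k*u) * Gr r (ξ-u) + k*((ξ-u)*Gr r (ξ-u)) + 0*((ξ-u)^2*Gr r (ξ-u))
      + 0*(Gr r (ξ-u))^3 = ξ * Mx g h u ξ := fun ξ => by rw [hMx ξ]; ring
  have eH0M : ∀ ξ : ℝ, (k*u^2/2) * Gr r (ξ-u) + (k*u)*((ξ-u)*Gr r (ξ-u))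
      + (k/2)*((ξ-u)^2*Gr r (ξ-u)) + ((g^2*π^2/6)*k^3)*(Gr r (ξ-u))^3
      = H0 g (Mx g h u ξ) ξ := fun ξ => by rw [hMx ξ]; unfold H0; ring
  -- integrability of the M side
  have intM_int : Integrable (fun ξ : ℝ => Mx g h u ξ) :=
    ((combo_int hr k 0 0 0).comp_sub_right u).congr
      (Filter.Eventually.of_forall fun ξ => eM ξ)
  have intxM_int : Integrable (fun ξ : ℝ => ξ * Mx g h u ξ) :=
    ((combo_int hr (k*u) k 0 0).comp_sub_right u).congr
      (Filter.Eventually.of_forall fun ξ => eXM ξ)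
  have intH0M_int : Integrable (fun ξ : ℝ => H0 g (Mx g h u ξ) ξ) :=
    ((combo_int hr (k*u^2/2) (k*u) (k/2) ((g^2*π^2/6)*k^3)).comp_sub_right u).congr
      (Filter.Eventually.of_forall fun ξ => eH0M ξ)
  -- values of the three integrals
  have intM_val : (∫ ξ : ℝ, Mx g h u ξ) = h := by
    have t1 : (∫ ξ : ℝ, Mx g h u ξ)
        = ∫ x : ℝ, (k * Gr r x + 0*(x*Gr r x) + 0*(x^2*Gr r x) + 0*(Gr r x)^3) := by
      rw [← MeasureTheory.integral_sub_right_eq_self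
        (fun x : ℝ => k * Gr r x + 0*(x*Gr r x) + 0*(x^2*Gr r x) + 0*(Gr r x)^3) u]
      exact MeasureTheory.integral_congr_ae (Filter.Eventually.of_forall fun ξ => (eM ξ).symm)
    rw [t1, combo hr, hkdef, hr2]
    field_simp
    ring
  have intxM_val : (∫ ξ : ℝ, ξ * Mx g h u ξ) = h * u := by
    have t1 : (∫ ξ : ℝ, ξ * Mx g h u ξ)
        = ∫ x : ℝ, ((k*u) * Gr r x + k*(x*Gr r x) + 0*(x^2*Gr r x) + 0*(Gr r x)^3) := by
      rw [← MeasureTheory.integral_sub_right_eq_self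
        (fun x : ℝ => (k*u) * Gr r x + k*(x*Gr r x) + 0*(x^2*Gr r x) + 0*(Gr r x)^3) u]
      exact MeasureTheory.integral_congr_ae (Filter.Eventually.of_forall fun ξ => (eXM ξ).symm)
    rw [t1, combo hr, hkdef, hr2]
    field_simp
    ring
  have intH0M_val : (∫ ξ : ℝ, H0 g (Mx g h u ξ) ξ) = h*u^2/2 + g*h^2/2 := by
    have t1 : (∫ ξ : ℝ, H0 g (Mx g h u ξ) ξ)
        = ∫ x : ℝ, ((k*u^2/2) * Gr r x + (k*u)*(x*Gr r x) + (k/2)*(x^2*Gr r x)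
            + ((g^2*π^2/6)*k^3)*(Gr r x)^3) := by
      rw [← MeasureTheory.integral_sub_right_eq_self
        (fun x : ℝ => (k*u^2/2) * Gr r x + (k*u)*(x*Gr r x) + (k/2)*(x^2*Gr r x)
            + ((g^2*π^2/6)*k^3)*(Gr r x)^3) u]
      exact MeasureTheory.integral_congr_ae (Filter.Eventually.of_forall fun ξ => (eH0M ξ).symm)
    rw [t1, combo hr, hkdef, show r^4 = (r^2)^2 from by ring, hr2]
    field_simp
    ring
  -- the linear functional ψ
  have eψf : (fun ξ : ℝ => (u*ξ + (g*h - u^2/2)) * f ξ)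
      = fun ξ : ℝ => u * (ξ * f ξ) + (g*h - u^2/2) * f ξ := by funext ξ; ring
  have eψM : (fun ξ : ℝ => (u*ξ + (g*h - u^2/2)) * Mx g h u ξ)
      = fun ξ : ℝ => u * (ξ * Mx g h u ξ) + (g*h - u^2/2) * Mx g h u ξ := by funext ξ; ring
  have hψf_int : Integrable (fun ξ : ℝ => (u*ξ + (g*h - u^2/2)) * f ξ) := by
    rw [eψf]; exact (hfint1.const_mul u).add (hfint.const_mul _)
  have hψM_int : Integrable (fun ξ : ℝ => (u*ξ + (g*h - u^2/2)) * Mx g h u ξ) := by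
    rw [eψM]; exact (intxM_int.const_mul u).add (intM_int.const_mul _)
  have hψf_val : (∫ ξ : ℝ, (u*ξ + (g*h - u^2/2)) * f ξ) = u*(h*u) + (g*h - u^2/2)*h := by
    rw [eψf, MeasureTheory.integral_add (hfint1.const_mul u) (hfint.const_mul _),
      integral_const_mul, integral_const_mul, hmom, hmass]
  have hψM_val : (∫ ξ : ℝ, (u*ξ + (g*h - u^2/2)) * Mx g h u ξ) = u*(h*u) + (g*h - u^2/2)*h := by
    rw [eψM, MeasureTheory.integral_add (intxM_int.const_mul u) (intM_int.const_mul _),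
      integral_const_mul, integral_const_mul, intxM_val, intM_val]
  -- pointwise convexity inequality
  have pw : ∀ ξ : ℝ, 0 ≤ (H0 g (f ξ) ξ - (u*ξ + (g*h - u^2/2)) * f ξ)
      - (H0 g (Mx g h u ξ) ξ - (u*ξ + (g*h - u^2/2)) * Mx g h u ξ) := by
    intro ξ
    refine pw_aux g h u ξ (f ξ) (Mx g h u ξ) hg (hfpos ξ) ?_ ?_
    · unfold Mx
      exact mul_nonneg (by positivity) (Real.sqrt_nonneg _)
    · unfold Mx
      rw [mul_pow, Real.sq_sqrt (le_max_left _ _)]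
      field_simp
  have key : (0:ℝ) ≤ ∫ ξ : ℝ, ((H0 g (f ξ) ξ - (u*ξ + (g*h - u^2/2)) * f ξ)
      - (H0 g (Mx g h u ξ) ξ - (u*ξ + (g*h - u^2/2)) * Mx g h u ξ)) := integral_nonneg pw
  have i1 : Integrable (fun ξ : ℝ => H0 g (f ξ) ξ - (u*ξ + (g*h - u^2/2)) * f ξ) :=
    hHint.sub hψf_int
  have i2 : Integrable (fun ξ : ℝ => H0 g (Mx g h u ξ) ξ
      - (u*ξ + (g*h - u^2/2)) * Mx g h u ξ) := intH0M_int.sub hψM_int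
  rw [MeasureTheory.integral_sub i1 i2,
    MeasureTheory.integral_sub hHint hψf_int,
    MeasureTheory.integral_sub intH0M_int hψM_int,
    hψf_val, hψM_val] at key
  exact ⟨intH0M_val.symm, by linarith⟩
end

section
/- The hydrostatic reconstructed heights satisfy 0 ≤ h_i − h_{i+1/2−} ≤ |z_{i+1} − z_i| and 0 ≤ h_i − h_{i−1/2+} ≤ |z_i − z_{i−1}|. -/
theorem reconstructed_heights_estimate (hi zim1 zi zip1 : ℝ) (hh : 0 ≤ hi) :
    (0 ≤ hi - max 0 (hi + zi - max zi zip1) ∧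
      hi - max 0 (hi + zi - max zi zip1) ≤ |zip1 - zi|) ∧
    (0 ≤ hi - max 0 (hi + zi - max zim1 zi) ∧
      hi - max 0 (hi + zi - max zim1 zi) ≤ |zi - zim1|) := by
  have key : ∀ a b : ℝ, 0 ≤ hi - max 0 (hi + a - max a b) ∧
      hi - max 0 (hi + a - max a b) ≤ |b - a| := by
    intro a b
    rcases le_total a b with h1 | h1
    · rw [max_eq_right h1, abs_of_nonneg (by linarith)]
      rcases le_total (hi + a - b) 0 with h2 | h2
      · rw [max_eq_left h2]; constructor <;> linarith
      · rw [max_eq_right h2]; constructor <;> linarith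
    · rw [max_eq_left h1, abs_of_nonpos (by linarith)]
      rw [max_eq_right (by linarith : (0:ℝ) ≤ hi + a - a)]
      constructor <;> linarith
  exact ⟨key zi zip1, by have := key zi zim1; rwa [max_comm zi zim1, abs_sub_comm zim1 zi] at this⟩
end

section
/- Kinetic well-balanced property: if u_i = 0 for all i and h_i + z_i is constant in i, then the reconstructed states satisfy U_{i+1/2−} = U_{i+1/2+} for all i, and the kinetic update f_i^{n+1−} defined by the hydrostatic-reconstruction kinetic scheme equals M_i(ξ) for every ξ. -/
open MeasureTheory Real

theorem kinetic_well_balanced (g σ : ℝ) (h z u : ℤ → ℝ) (hg : 0 < g)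
    (hh : ∀ i, 0 ≤ h i) (hu : ∀ i, u i = 0)
    (hsteady : ∀ i, h i + z i = h (i+1) + z (i+1)) :
    ∀ i : ℤ,
      (max 0 (h i + z i - max (z i) (z (i+1))) = max 0 (h (i+1) + z (i+1) - max (z i) (z (i+1)))
       ∧ max 0 (h i + z i - max (z i) (z (i+1))) * u i
         = max 0 (h (i+1) + z (i+1) - max (z i) (z (i+1))) * u (i+1)) ∧
      ∀ ξ : ℝ,
        Mx g (h i) (u i) ξ
          - σ * (ξ * (if ξ < 0 then 1 else 0) * Mx g (max 0 (h (i+1) + z (i+1) - max (z i) (z (i+1)))) (u (i+1)) ξ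
            + ξ * (if 0 < ξ then 1 else 0) * Mx g (max 0 (h i + z i - max (z i) (z (i+1)))) (u i) ξ
            + (ξ - u i) * (Mx g (h i) (u i) ξ - Mx g (max 0 (h i + z i - max (z i) (z (i+1)))) (u i) ξ)
            - ξ * (if 0 < ξ then 1 else 0) * Mx g (max 0 (h (i-1) + z (i-1) - max (z (i-1)) (z i))) (u (i-1)) ξ
            - ξ * (if ξ < 0 then 1 else 0) * Mx g (max 0 (h i + z i - max (z (i-1)) (z i))) (u i) ξ
            - (ξ - u i) * (Mx g (h i) (u i) ξ - Mx g (max 0 (h i + z i - max (z (i-1)) (z i))) (u i) ξ))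
        = Mx g (h i) (u i) ξ := by
  intro i
  have e1 : h (i+1) + z (i+1) = h i + z i := (hsteady i).symm
  have e2 : h (i-1) + z (i-1) = h i + z i := by
    have := hsteady (i-1); simpa using this
  refine ⟨⟨by rw [e1], by rw [e1, hu i, hu (i+1)]⟩, ?_⟩
  intro ξ
  rw [e1, e2, hu i, hu (i+1), hu (i-1)]
  rcases lt_trichotomy ξ 0 with hξ | hξ | hξ
  · simp only [if_pos hξ, if_neg (not_lt.mpr hξ.le)]
    ring
  · subst hξ; simp
  · simp only [if_pos hξ, if_neg (not_lt.mpr hξ.le)]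
    ring
end
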